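/- Let α1, α2, α3 ∈ ℂ. For every γ ∈ ℝ with |γ| ≥ |α1|, and writing K_ξ = r cos θ, K_η = r sin θ, the dispersion relation (r²/2 · sin(2θ) + |α2|² − |α3|²)² = r²(γ² − |α1|²) − ψ, where ψ = γ⁴ − 2γ² Σ_{j=1}^3 |α_j|² + 4γ(Re(conj(α1)α2α3 + α1 conj(α2) α3)) + |α1|⁴ − 2|α1|² Re(α3²) − 2 Re(conj(α1)² α2²), has a real solution θ ∈ (−π, π] for all sufficiently large r > 0. Conversely, for |γ| < |α1| no real solution θ exists for large r. -/

import Mathlib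

/-!
Solving for `sin (2θ)` gives `sin (2θ) = (2 / r²) (|α3|² - |α2|² ± √E)` with `E = r² c - ψ` and
`c = γ² - |α1|²`, so a solution exists as soon as `E ≥ 0` and this quotient lies in `[-1, 1]`.
If `c > 0`, then `E → ∞` while `√E = O(r)`, so the quotient tends to `0`. If `c = 0`, then `ψ` is
minus a square (`psi4_eq`), so `E = -ψ ≥ 0` is constant. If `c < 0`, then `E → -∞` is eventually
negative, hence not a square.
-/

/-- The quantity `ψ` in the large-`r` asymptotics of the four-mode dispersion
relation. -/
noncomputable def psi4 (α1 α2 α3 : ℂ) (γ : ℝ) : ℝ :=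
  γ ^ 4 - 2 * γ ^ 2 * (‖α1‖ ^ 2 + ‖α2‖ ^ 2 + ‖α3‖ ^ 2)
    + 4 * γ * (((starRingEnd ℂ) α1 * α2 * α3 + α1 * (starRingEnd ℂ) α2 * α3).re)
    + ‖α1‖ ^ 4 - 2 * ‖α1‖ ^ 2 * ((α3 ^ 2).re)
    - 2 * ((((starRingEnd ℂ) α1) ^ 2 * α2 ^ 2).re)

open Filter Real

lemma exists_nonneg_forall_gt_of_eventually_atTop {p : ℝ → Prop} (h : ∀ᶠ r in atTop, p r) :
    ∃ R : ℝ, 0 ≤ R ∧ ∀ r : ℝ, R < r → p r := by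
  obtain ⟨a, ha⟩ := eventually_atTop.mp h
  exact ⟨max a 0, le_max_right a 0, fun r hr => ha r ((le_max_left a 0).trans hr.le)⟩

lemma exists_mem_Ioc_sin_two_mul_eq {s : ℝ} (h₁ : -1 ≤ s) (h₂ : s ≤ 1) :
    ∃ θ ∈ Set.Ioc (-π) π, sin (2 * θ) = s := by
  refine ⟨arcsin s / 2, ⟨?_, ?_⟩, ?_⟩
  · linarith [neg_pi_div_two_le_arcsin s, pi_pos]
  · linarith [arcsin_le_pi_div_two s, pi_pos]
  · rw [mul_div_cancel₀ _ two_ne_zero, sin_arcsin h₁ h₂]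

lemma exists_mem_Ioc_sq_eq {r B C E : ℝ} (hr : 0 < r) (hE : 0 ≤ E)
    (h : |C - B + √E| ≤ r ^ 2 / 2) :
    ∃ θ ∈ Set.Ioc (-π) π, (r ^ 2 / 2 * sin (2 * θ) + B - C) ^ 2 = E := by
  have hr2 : 0 < r ^ 2 / 2 := by positivity
  obtain ⟨h₁, h₂⟩ := abs_le.mp h
  obtain ⟨θ, hθ, hsin⟩ := exists_mem_Ioc_sin_two_mul_eq (s := (C - B + √E) / (r ^ 2 / 2))
    ((le_div_iff₀ hr2).mpr (by linarith)) ((div_le_one hr2).mpr h₂)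
  refine ⟨θ, hθ, ?_⟩
  rw [hsin, mul_div_cancel₀ _ hr2.ne', show C - B + √E + B - C = √E by ring, sq_sqrt hE]

lemma sqrt_sq_mul_sub_le {r c ψ : ℝ} (hr : 0 ≤ r) (hc : 0 ≤ c) :
    √(r ^ 2 * c - ψ) ≤ r * √c + √|ψ| := by
  rw [sqrt_le_left (by positivity)]
  have hrc : 0 ≤ r * √c * √|ψ| := by positivity
  nlinarith [sq_sqrt hc, sq_sqrt (abs_nonneg ψ), neg_abs_le ψ]

lemma eventually_abs_add_sqrt_sq_mul_sub_le (A c ψ : ℝ) (hc : 0 ≤ c) :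
    ∀ᶠ r in atTop, |A + √(r ^ 2 * c - ψ)| ≤ r ^ 2 / 2 := by
  set K := |A| + √c + √|ψ|
  filter_upwards [eventually_ge_atTop 1, eventually_ge_atTop (2 * K)] with r hr₁ hrK
  have hK : 0 ≤ K := by positivity
  calc |A + √(r ^ 2 * c - ψ)| ≤ |A| + |√(r ^ 2 * c - ψ)| := abs_add_le _ _
    _ = |A| + √(r ^ 2 * c - ψ) := by rw [abs_of_nonneg (sqrt_nonneg _)]
    _ ≤ |A| + (r * √c + √|ψ|) := by gcongr; exact sqrt_sq_mul_sub_le (by linarith) hc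
    _ ≤ r * K := by nlinarith [abs_nonneg A, sqrt_nonneg |ψ|]
    _ ≤ r ^ 2 / 2 := by nlinarith

lemma tendsto_sq_mul_sub_atTop {c : ℝ} (ψ : ℝ) (hc : 0 < c) :
    Tendsto (fun r : ℝ => r ^ 2 * c - ψ) atTop atTop :=
  tendsto_atTop_add_const_right _ _ ((tendsto_pow_atTop two_ne_zero).atTop_mul_const hc)

lemma tendsto_sq_mul_sub_atBot {c : ℝ} (ψ : ℝ) (hc : c < 0) :
    Tendsto (fun r : ℝ => r ^ 2 * c - ψ) atTop atBot :=
  tendsto_atBot_add_const_right _ _ ((tendsto_pow_atTop two_ne_zero).atTop_mul_const_of_neg hc)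

lemma psi4_eq (α1 α2 α3 : ℂ) (γ : ℝ) :
    psi4 α1 α2 α3 γ = (γ ^ 2 - ‖α1‖ ^ 2) *
        (γ ^ 2 - ‖α1‖ ^ 2 - 2 * ‖α2‖ ^ 2 - 2 * ‖α3‖ ^ 2 + 4 * α3.re ^ 2)
      - 4 * (γ * α3.re - ((starRingEnd ℂ) α1 * α2).re) ^ 2 := by
  have h4 : ‖α1‖ ^ 4 = (‖α1‖ ^ 2) ^ 2 := by ring
  simp only [psi4, h4, Complex.sq_norm, Complex.normSq_apply]
  simp only [pow_two, Complex.add_re, Complex.mul_re, Complex.mul_im, Complex.conj_re,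
    Complex.conj_im]
  ring

lemma psi4_nonpos_of_sq_eq {α1 : ℂ} {γ : ℝ} (α2 α3 : ℂ) (h : γ ^ 2 = ‖α1‖ ^ 2) :
    psi4 α1 α2 α3 γ ≤ 0 := by
  rw [psi4_eq, h, sub_self, zero_mul, zero_sub, neg_nonpos]
  positivity

/-- for `|γ| ≥ |α1|` the equation
`(r²/2 sin(2θ) + |α2|² − |α3|²)² = r²(γ² − |α1|²) − ψ` has a solution
`θ ∈ (−π, π]` for all sufficiently large `r > 0`; for `|γ| < |α1|` no real
solution `θ` exists for large `r`. -/
theorem stmt8 (α1 α2 α3 : ℂ) (γ : ℝ) :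
    (|γ| ≥ ‖α1‖ → ∃ R : ℝ, 0 ≤ R ∧ ∀ r : ℝ, R < r →
      ∃ θ ∈ Set.Ioc (-Real.pi) Real.pi,
        (r ^ 2 / 2 * Real.sin (2 * θ) + ‖α2‖ ^ 2 - ‖α3‖ ^ 2) ^ 2
          = r ^ 2 * (γ ^ 2 - ‖α1‖ ^ 2) - psi4 α1 α2 α3 γ) ∧
    (|γ| < ‖α1‖ → ∃ R : ℝ, 0 ≤ R ∧ ∀ r : ℝ, R < r → ∀ θ : ℝ,
        (r ^ 2 / 2 * Real.sin (2 * θ) + ‖α2‖ ^ 2 - ‖α3‖ ^ 2) ^ 2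
          ≠ r ^ 2 * (γ ^ 2 - ‖α1‖ ^ 2) - psi4 α1 α2 α3 γ) := by
  set ψ := psi4 α1 α2 α3 γ
  constructor
  · intro hge
    have hc : 0 ≤ γ ^ 2 - ‖α1‖ ^ 2 := sub_nonneg.mpr (sq_le_sq.mpr (by rwa [abs_norm]))
    have hE : ∀ᶠ r in atTop, 0 ≤ r ^ 2 * (γ ^ 2 - ‖α1‖ ^ 2) - ψ := by
      rcases hc.eq_or_lt with hc₀ | hc₀
      · have hψ : ψ ≤ 0 := psi4_nonpos_of_sq_eq α2 α3 (sub_eq_zero.mp hc₀.symm)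
        exact Eventually.of_forall fun r => by rw [← hc₀]; linarith
      · exact (tendsto_sq_mul_sub_atTop ψ hc₀).eventually_ge_atTop 0
    obtain ⟨R, hR, hsol⟩ := exists_nonneg_forall_gt_of_eventually_atTop <|
      (eventually_gt_atTop 0).and <| hE.and <|
        eventually_abs_add_sqrt_sq_mul_sub_le (‖α3‖ ^ 2 - ‖α2‖ ^ 2) _ ψ hc
    exact ⟨R, hR, fun r hr =>
      exists_mem_Ioc_sq_eq (hsol r hr).1 (hsol r hr).2.1 (hsol r hr).2.2⟩
  · intro hlt
    have hc : γ ^ 2 - ‖α1‖ ^ 2 < 0 := sub_neg.mpr (sq_lt_sq.mpr (by rwa [abs_norm]))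
    obtain ⟨R, hR, hneg⟩ := exists_nonneg_forall_gt_of_eventually_atTop <|
      (tendsto_sq_mul_sub_atBot ψ hc).eventually_lt_atBot 0
    exact ⟨R, hR, fun r hr θ heq => (hneg r hr).not_ge (heq ▸ sq_nonneg _)⟩
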